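/- arXiv:2406.02475 — 6 statements merged into one kernel-verified Lean document; each statement's English description precedes it below -/
import Mathlib

section
/- Let A and G be filtered groups and λ : G → Aut(A) a group homomorphism such that for all i, j and g ∈ G_i, a ∈ A_j one has λ_g(a)·a⁻¹ ∈ A_{i+j}. Then the semidirect product A ⋊_λ G is a filtered group with filtration (A ⋊_λ G)_i = A_i ⋊ G_i, i.e., [A_i ⋊ G_i, A_j ⋊ G_j] ⊆ A_{i+j} ⋊ G_{i+j}. -/
/-!
Write `x = (a, g)` and `y = (b, h)`. The `G`-component of `[x, y]` is `[g, h]`, and the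
`A`-component is `a · g(b) · (ghg⁻¹)(a⁻¹) · [g, h](b⁻¹)`. Modulo the normal subgroup `A_{i+j}`
each of the three automorphisms fixes its argument, by the hypothesis on `λ` applied to
`g ∈ Gᵢ`, `ghg⁻¹ ∈ Gⱼ` and `[g, h] ∈ G_{i+j}` (using `A_{i+2j} ⊆ A_{i+j}` for the last), so the
`A`-component is congruent to `[a, b] ∈ A_{i+j}`.
-/

namespace SemidirectProduct

variable {A G : Type*} [Group A] [Group G] {φ : G →* MulAut A}

theorem commutator_left (x y : A ⋊[φ] G) :
    (x * y * x⁻¹ * y⁻¹).left =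
      x.left * φ x.right y.left * φ (x.right * y.right * x.right⁻¹) x.left⁻¹ *
        φ (x.right * y.right * x.right⁻¹ * y.right⁻¹) y.left⁻¹ := by
  simp [mul_assoc]

theorem commutator_left_mem {N : Subgroup A} [N.Normal] {x y : A ⋊[φ] G}
    (hcomm : x.left * y.left * x.left⁻¹ * y.left⁻¹ ∈ N)
    (hfix₁ : φ x.right y.left * y.left⁻¹ ∈ N)
    (hfix₂ : φ (x.right * y.right * x.right⁻¹) x.left * x.left⁻¹ ∈ N)
    (hfix₃ : φ (x.right * y.right * x.right⁻¹ * y.right⁻¹) y.left * y.left⁻¹ ∈ N) :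
    (x * y * x⁻¹ * y⁻¹).left ∈ N := by
  have fixes {g : G} {a : A} (h : φ g a * a⁻¹ ∈ N) : (φ g a : A ⧸ N) = a :=
    QuotientGroup.eq_iff_div_mem.mpr (by rwa [div_eq_mul_inv])
  rw [commutator_left, ← QuotientGroup.eq_one_iff]
  rw [← QuotientGroup.eq_one_iff] at hcomm
  simp only [QuotientGroup.mk_mul, QuotientGroup.mk_inv, map_inv] at hcomm ⊢
  rw [fixes hfix₁, fixes hfix₂, fixes hfix₃]
  exact hcomm

end SemidirectProduct

theorem stmt9_general {A G : Type*} [Group A] [Group G] (φ : G →* MulAut A)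
    (Af : ℕ → Subgroup A) (Gf : ℕ → Subgroup G)
    (hAnorm : ∀ i, (Af i).Normal) (hGnorm : ∀ i, (Gf i).Normal)
    (hAdesc : ∀ i, Af (i + 1) ≤ Af i)
    (hAcomm : ∀ i j, ∀ x ∈ Af i, ∀ y ∈ Af j, x * y * x⁻¹ * y⁻¹ ∈ Af (i + j))
    (hGcomm : ∀ i j, ∀ x ∈ Gf i, ∀ y ∈ Gf j, x * y * x⁻¹ * y⁻¹ ∈ Gf (i + j))
    (hlam : ∀ i j, ∀ g ∈ Gf i, ∀ a ∈ Af j, φ g a * a⁻¹ ∈ Af (i + j)) :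
    ∀ i j, ∀ x y : A ⋊[φ] G,
      x.left ∈ Af i → x.right ∈ Gf i → y.left ∈ Af j → y.right ∈ Gf j →
      (x * y * x⁻¹ * y⁻¹).left ∈ Af (i + j) ∧
      (x * y * x⁻¹ * y⁻¹).right ∈ Gf (i + j) := by
  intro i j x y hxl hxr hyl hyr
  have hright := hGcomm i j _ hxr _ hyr
  refine ⟨?_, hright⟩
  have hconj : x.right * y.right * x.right⁻¹ ∈ Gf j := (hGnorm j).conj_mem _ hyr _
  have hAanti : Antitone Af := antitone_nat_of_succ_le hAdesc
  have := hAnorm (i + j)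
  refine SemidirectProduct.commutator_left_mem (hAcomm i j _ hxl _ hyl) (hlam i j _ hxr _ hyl)
    ?_ (hAanti (by omega) (hlam (i + j) j _ hright _ hyl))
  simpa only [add_comm j i] using hlam j i _ hconj _ hxl

/-- Let `A`, `G` be filtered groups and `λ : G → Aut(A)` a homomorphism with
`λ_g(a) · a⁻¹ ∈ A_{i+j}` for `g ∈ Gᵢ`, `a ∈ Aⱼ`. Then the semidirect product
`A ⋊ G` is filtered by `Aᵢ ⋊ Gᵢ`:
`[Aᵢ ⋊ Gᵢ, Aⱼ ⋊ Gⱼ] ⊆ A_{i+j} ⋊ G_{i+j}`. -/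
theorem stmt9 {A G : Type*} [Group A] [Group G] (φ : G →* MulAut A)
    (Af : ℕ → Subgroup A) (Gf : ℕ → Subgroup G)
    (hAnorm : ∀ i, (Af i).Normal) (hGnorm : ∀ i, (Gf i).Normal)
    (hA0 : Af 0 = ⊤) (hG0 : Gf 0 = ⊤)
    (hAdesc : ∀ i, Af (i + 1) ≤ Af i) (hGdesc : ∀ i, Gf (i + 1) ≤ Gf i)
    (hAcomm : ∀ i j, ∀ x ∈ Af i, ∀ y ∈ Af j, x * y * x⁻¹ * y⁻¹ ∈ Af (i + j))
    (hGcomm : ∀ i j, ∀ x ∈ Gf i, ∀ y ∈ Gf j, x * y * x⁻¹ * y⁻¹ ∈ Gf (i + j))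
    (hlam : ∀ i j, ∀ g ∈ Gf i, ∀ a ∈ Af j, φ g a * a⁻¹ ∈ Af (i + j)) :
    ∀ i j, ∀ x y : A ⋊[φ] G,
      x.left ∈ Af i → x.right ∈ Gf i → y.left ∈ Af j → y.right ∈ Gf j →
      (x * y * x⁻¹ * y⁻¹).left ∈ Af (i + j) ∧
      (x * y * x⁻¹ * y⁻¹).right ∈ Gf (i + j) :=
  stmt9_general φ Af Gf hAnorm hGnorm hAdesc hAcomm hGcomm hlam
end

section
/- Let 𝔞 be a Lie ring. There is a bijective correspondence between biadditive operations ▷ making (𝔞, ▷) a post-Lie ring and t-bijective sub Lie rings 𝔤 of aff(𝔞) = 𝔞 ⊕ Der(𝔞): to ▷ one associates 𝔤 = {(a, L_a) | a ∈ 𝔞} where L_a(b) = a▷b, and conversely from a t-bijective 𝔤 one defines a▷b = δ(b) for the unique (a, δ) ∈ 𝔤. -/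
/-- A post-Lie ring structure on a Lie ring `A`: a biadditive operation `▷`
satisfying the two post-Lie axioms. -/
structure PostLieOp (A : Type*) [LieRing A] where
  t : A →+ A →+ A
  ax1 : ∀ x y z : A, t x ⁅y, z⁆ = ⁅t x y, z⁆ + ⁅y, t x z⁆
  ax2 : ∀ x y z : A, t ⁅x, y⁆ z =
    (t x (t y z) - t (t x y) z) - (t y (t x z) - t (t y x) z)

/-- The bracket of `aff(𝔞) = 𝔞 ⊕ Der(𝔞)`:
`[(a,δ),(b,ε)] = ([a,b] + δ(b) - ε(a), δε - εδ)`. -/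
def affBr {A : Type*} [LieRing A] (p q : A × (A →+ A)) : A × (A →+ A) :=
  (⁅p.1, q.1⁆ + p.2 q.1 - q.2 p.1, p.2.comp q.2 - q.2.comp p.2)

/-- A t-bijective sub Lie ring of `aff(𝔞)`: a set of pairs `(a, δ)` with each
`δ` a derivation, closed under the Lie ring operations of `aff(𝔞)`, such that
the projection to `𝔞` is bijective. -/
structure TSub (A : Type*) [LieRing A] where
  S : Set (A × (A →+ A))
  der : ∀ p ∈ S, ∀ a b : A, p.2 ⁅a, b⁆ = ⁅p.2 a, b⁆ + ⁅a, p.2 b⁆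
  zero_mem : (0 : A × (A →+ A)) ∈ S
  add_mem : ∀ p ∈ S, ∀ q ∈ S, p + q ∈ S
  neg_mem : ∀ p ∈ S, -p ∈ S
  br_mem : ∀ p ∈ S, ∀ q ∈ S, affBr p q ∈ S
  tbij : Function.Bijective fun p : S => (p : A × (A →+ A)).1

/-! A set of pairs `(a, δ)` projecting bijectively onto `𝔞` is the graph of a map `a ↦ L_a`.
The graph is closed under addition and negation exactly when `L` is additive, consists of
derivations exactly when `▷` satisfies the first post-Lie axiom, and is closed under the bracket
of `aff(𝔞)` exactly when it satisfies the second, since the first component of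
`[(x, L_x), (y, L_y)]` is `[x, y] + x ▷ y - y ▷ x`. -/

namespace Set

variable {α β : Type*} {S : Set (α × β)}

noncomputable def graphFun (hS : Function.Bijective fun p : S => (p : α × β).1) (a : α) : β :=
  ((Equiv.ofBijective _ hS).symm a : α × β).2

theorem mem_iff_snd_eq_graphFun (hS : Function.Bijective fun p : S => (p : α × β).1)
    {p : α × β} : p ∈ S ↔ p.2 = graphFun hS p.1 := by
  let e := Equiv.ofBijective _ hS
  constructor
  · intro hp
    have hsymm : e.symm p.1 = ⟨p, hp⟩ := e.symm_apply_eq.mpr rfl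
    simp only [graphFun, e, hsymm]
  · intro hp
    have hp_eq : p = e.symm p.1 := Prod.ext (e.apply_symm_apply p.1).symm hp
    exact hp_eq ▸ (e.symm p.1).2

end Set

section PostLie

variable {A : Type*} [LieRing A]

theorem affBr_mem_graph_iff (t : A →+ A →+ A) (x y : A) :
    (affBr (x, t x) (y, t y)).2 = t (affBr (x, t x) (y, t y)).1 ↔
      ∀ z, t ⁅x, y⁆ z = (t x (t y z) - t (t x y) z) - (t y (t x z) - t (t y x) z) := by
  simp only [affBr, map_add, map_sub, DFunLike.ext_iff, AddMonoidHom.sub_apply,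
    AddMonoidHom.add_apply, AddMonoidHom.coe_comp, Function.comp_apply]
  refine forall_congr' fun z => ?_
  constructor <;> intro h <;> linear_combination (norm := abel) -h

theorem PostLieOp.ext {P Q : PostLieOp A} (h : P.t = Q.t) : P = Q := by
  cases P; cases Q; cases h; rfl

theorem TSub.ext {T T' : TSub A} (h : T.S = T'.S) : T = T' := by
  cases T; cases T'; cases h; rfl

def PostLieOp.toTSub (P : PostLieOp A) : TSub A where
  S := {p | p.2 = P.t p.1}
  der := by
    rintro ⟨a, δ⟩ (rfl : δ = P.t a) b c
    exact P.ax1 a b c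
  zero_mem := by simp
  add_mem := by
    rintro ⟨a, δ⟩ (rfl : δ = P.t a) ⟨b, ε⟩ (rfl : ε = P.t b)
    simp
  neg_mem := by
    rintro ⟨a, δ⟩ (rfl : δ = P.t a)
    simp
  br_mem := by
    rintro ⟨a, δ⟩ (rfl : δ = P.t a) ⟨b, ε⟩ (rfl : ε = P.t b)
    exact (affBr_mem_graph_iff P.t a b).mpr (P.ax2 a b)
  tbij := by
    refine ⟨fun p q hpq => Subtype.ext (Prod.ext hpq ?_), fun a => ⟨⟨(a, P.t a), rfl⟩, rfl⟩⟩
    rw [p.2, q.2]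
    exact congrArg P.t hpq

namespace TSub

variable (T : TSub A)

theorem mk_graphFun_mem (a : A) : (a, Set.graphFun T.tbij a) ∈ T.S :=
  (Set.mem_iff_snd_eq_graphFun T.tbij).mpr rfl

/-- The operation `a ▷ b = δ(b)` for the unique `(a, δ) ∈ 𝔤`. -/
noncomputable def op : A →+ A →+ A :=
  AddMonoidHom.mk' (Set.graphFun T.tbij) fun a b =>
    ((Set.mem_iff_snd_eq_graphFun T.tbij).mp (T.add_mem _ (T.mk_graphFun_mem a) _ (T.mk_graphFun_mem b))).symm

theorem mem_S_iff {p : A × (A →+ A)} : p ∈ T.S ↔ p.2 = T.op p.1 :=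
  Set.mem_iff_snd_eq_graphFun T.tbij

noncomputable def toPostLieOp : PostLieOp A where
  t := T.op
  ax1 x := T.der (x, _) (T.mk_graphFun_mem x)
  ax2 x y := (affBr_mem_graph_iff T.op x y).mp
    ((T.mem_S_iff).mp (T.br_mem _ (T.mk_graphFun_mem x) _ (T.mk_graphFun_mem y)))

end TSub

noncomputable def postLieOpEquivTSub : PostLieOp A ≃ TSub A where
  toFun := PostLieOp.toTSub
  invFun := TSub.toPostLieOp
  left_inv P := PostLieOp.ext <| AddMonoidHom.ext fun a =>
    (((PostLieOp.toTSub P).mem_S_iff).mp (rfl : (a, P.t a).2 = P.t a)).symm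
  right_inv T := TSub.ext <| Set.ext fun _ => T.mem_S_iff.symm

end PostLie

/-- For a Lie ring `𝔞` there is a bijective correspondence between post-Lie
ring structures `▷` on `𝔞` and t-bijective sub Lie rings of `aff(𝔞)`, sending
`▷` to `{(a, L_a) | a ∈ 𝔞}`. -/
theorem stmt11 {A : Type*} [LieRing A] :
    ∃ e : PostLieOp A ≃ TSub A,
      ∀ P : PostLieOp A,
        (e P).S = {p : A × (A →+ A) | p.2 = P.t p.1} :=
  ⟨postLieOpEquivTSub, fun _ => rfl⟩
end

section
/- Let (𝔞, ▷) be a post-Lie ring and define L¹(𝔞) = 𝔞 and L^{i+1}(𝔞) the additive subgroup generated by all a▷b and [a,b] with a ∈ 𝔞, b ∈ L^i(𝔞). Then [L^i(𝔞), L^j(𝔞)] ⊆ L^{i+j}(𝔞) for all i, j ≥ 1. -/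
/-!
Both kinds of generators of `L^{i+1}` are images `D b` of an element `b ∈ L^i` under a derivation
`D` of the bracket that raises the filtration degree by one: `D = a ▷ ·` (the first post-Lie
axiom) or `D = ad a` (the Jacobi identity). From `⁅D b, y⁆ = D ⁅b, y⁆ - ⁅b, D y⁆` the claim follows
by induction on `i`, for all `j` at once.
-/

section

variable {A : Type*} [LieRing A]

theorem AddSubgroup.lie_mem_of_mem_closure {S : Set A} {M N : AddSubgroup A}
    (hS : ∀ x ∈ S, ∀ y ∈ M, ⁅x, y⁆ ∈ N) {x : A} (hx : x ∈ AddSubgroup.closure S) :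
    ∀ y ∈ M, ⁅x, y⁆ ∈ N := by
  induction hx using AddSubgroup.closure_induction with
  | mem x hx => exact hS x hx
  | zero => simp
  | add u v _ _ hu hv =>
    exact fun y hy ↦ by simpa only [add_lie] using add_mem (hu y hy) (hv y hy)
  | neg u _ hu => exact fun y hy ↦ by simpa only [neg_lie] using neg_mem (hu y hy)

theorem lie_apply_mem_of_leibniz {Ls : ℕ → AddSubgroup A} {D : A → A}
    (hD : ∀ u v, D ⁅u, v⁆ = ⁅D u, v⁆ + ⁅u, D v⁆) (hDLs : ∀ k, ∀ z ∈ Ls k, D z ∈ Ls (k + 1))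
    {i : ℕ} {b : A} (hb : ∀ j, ∀ y ∈ Ls j, ⁅b, y⁆ ∈ Ls (i + j + 1))
    {j : ℕ} {y : A} (hy : y ∈ Ls j) : ⁅D b, y⁆ ∈ Ls (i + 1 + j + 1) := by
  rw [eq_sub_of_add_eq (hD b y).symm, Nat.add_right_comm i 1 j]
  exact sub_mem (hDLs _ _ (hb j y hy)) (hb (j + 1) _ (hDLs j y hy))

/-- `Ls i` plays the role of `L^{i+1}(𝔞)` for the product `t a b = a ▷ b`. -/
def IsPostLieLowerSeries (t : A →+ A →+ A) (Ls : ℕ → AddSubgroup A) : Prop :=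
  ∀ i, Ls (i + 1) = AddSubgroup.closure {x : A | ∃ a b : A, b ∈ Ls i ∧ (x = t a b ∨ x = ⁅a, b⁆)}

namespace IsPostLieLowerSeries

variable {t : A →+ A →+ A} {Ls : ℕ → AddSubgroup A}

theorem apply_mem_succ (hs : IsPostLieLowerSeries t Ls) (a : A) {k : ℕ} {b : A}
    (hb : b ∈ Ls k) : t a b ∈ Ls (k + 1) := by
  rw [hs]
  exact AddSubgroup.subset_closure ⟨a, b, hb, Or.inl rfl⟩

theorem lie_mem_succ (hs : IsPostLieLowerSeries t Ls) (a : A) {k : ℕ} {b : A}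
    (hb : b ∈ Ls k) : ⁅a, b⁆ ∈ Ls (k + 1) := by
  rw [hs]
  exact AddSubgroup.subset_closure ⟨a, b, hb, Or.inr rfl⟩

theorem lie_mem (h1 : ∀ x y z : A, t x ⁅y, z⁆ = ⁅t x y, z⁆ + ⁅y, t x z⁆)
    (hs : IsPostLieLowerSeries t Ls) (i : ℕ) :
    ∀ j, ∀ x ∈ Ls i, ∀ y ∈ Ls j, ⁅x, y⁆ ∈ Ls (i + j + 1) := by
  induction i with
  | zero => exact fun j x _ y hy ↦ by simpa using hs.lie_mem_succ x hy
  | succ i ih =>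
    intro j x hx
    rw [hs] at hx
    refine AddSubgroup.lie_mem_of_mem_closure ?_ hx
    rintro _ ⟨a, b, hb, rfl | rfl⟩ y hy
    · exact lie_apply_mem_of_leibniz (h1 a) (fun _ _ hz ↦ hs.apply_mem_succ a hz)
        (ih · b hb) hy
    · exact lie_apply_mem_of_leibniz (leibniz_lie a) (fun _ _ hz ↦ hs.lie_mem_succ a hz)
        (ih · b hb) hy

end IsPostLieLowerSeries

end

theorem stmt12_general {A : Type*} [LieRing A] (t : A →+ A →+ A)
    (h1 : ∀ x y z : A, t x ⁅y, z⁆ = ⁅t x y, z⁆ + ⁅y, t x z⁆)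
    (Ls : ℕ → AddSubgroup A)
    (hs : ∀ i, Ls (i + 1) = AddSubgroup.closure
      {x : A | ∃ a b : A, b ∈ Ls i ∧ (x = t a b ∨ x = ⁅a, b⁆)}) :
    ∀ i j, ∀ x ∈ Ls i, ∀ y ∈ Ls j, ⁅x, y⁆ ∈ Ls (i + j + 1) :=
  IsPostLieLowerSeries.lie_mem h1 hs

/-- Let `(𝔞,▷)` be a post-Lie ring and `L¹(𝔞) = 𝔞`,
`L^{i+1}(𝔞) = ⟨a▷b, [a,b] : a ∈ 𝔞, b ∈ L^i(𝔞)⟩₊`. Then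
`[L^i(𝔞), L^j(𝔞)] ⊆ L^{i+j}(𝔞)`. (Here `Ls i = L^{i+1}(𝔞)`.) -/
theorem stmt12 {A : Type*} [LieRing A] (t : A →+ A →+ A)
    (h1 : ∀ x y z : A, t x ⁅y, z⁆ = ⁅t x y, z⁆ + ⁅y, t x z⁆)
    (h2 : ∀ x y z : A, t ⁅x, y⁆ z =
      (t x (t y z) - t (t x y) z) - (t y (t x z) - t (t y x) z))
    (Ls : ℕ → AddSubgroup A) (h0 : Ls 0 = ⊤)
    (hs : ∀ i, Ls (i + 1) = AddSubgroup.closure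
      {x : A | ∃ a b : A, b ∈ Ls i ∧ (x = t a b ∨ x = ⁅a, b⁆)}) :
    ∀ i j, ∀ x ∈ Ls i, ∀ y ∈ Ls j, ⁅x, y⁆ ∈ Ls (i + j + 1) :=
  stmt12_general t h1 Ls hs
end

section
/- A post-Lie ring (𝔞, ▷) is L-nilpotent (L^{k+1}(𝔞) = 0 for some k) if and only if (𝔞, ▷) is left nilpotent (the chain 𝔞¹ = 𝔞, 𝔞^{i+1} = ⟨𝔞 ▷ 𝔞^i⟩ reaches 0) and the Lie ring 𝔞 is nilpotent. -/
/-!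
Both left products and Lie brackets raise the L-degree, so `𝔞^i` and `γ^i(𝔞)` lie in `L^i(𝔞)`.
Conversely, since every `a ▷ ·` is a derivation of the bracket, `L^i(𝔞)` lies in the additive span
of right-nested brackets `[w₁, [w₂, …, [w_k, w₀]]]` with `w_j ∈ 𝔞^{m_j}` and `Σ m_j + k = i`.
If `𝔞^M = 0` and `γ^N(𝔞) = 0`, such a bracket with `i ≥ N M` vanishes: either `k ≥ N`, or some
`m_j ≥ M`.
-/

open AddSubgroup

section AddGroup

variable {A : Type*} [AddGroup A]

lemma AddSubgroup.apply_mem_closure_of_forall {S T : Set A} (f : A →+ A)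
    (h : ∀ y ∈ S, f y ∈ closure T) {x : A} (hx : x ∈ closure S) : f x ∈ closure T :=
  (closure_le ((closure T).comap f)).2 h hx

lemma le_of_succ_eq_closure {S T : ℕ → AddSubgroup A} (F G : AddSubgroup A → Set A)
    (hFG : ∀ U V, U ≤ V → F U ⊆ G V) (hT0 : T 0 = ⊤)
    (hS : ∀ i, S (i + 1) = closure (F (S i))) (hT : ∀ i, T (i + 1) = closure (G (T i))) :
    ∀ i, S i ≤ T i
  | 0 => hT0 ▸ le_top
  | i + 1 => by
    rw [hS, hT]
    exact closure_mono (hFG _ _ (le_of_succ_eq_closure F G hFG hT0 hS hT i))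

lemma eq_bot_of_le_of_succ_eq_closure {S : ℕ → AddSubgroup A} (f : A → A → A)
    (hf : ∀ a, f a 0 = 0) (hS : ∀ i, S (i + 1) = closure {x | ∃ a b, b ∈ S i ∧ x = f a b})
    {i j : ℕ} (hi : S i = ⊥) (hij : i ≤ j) : S j = ⊥ := by
  induction j, hij using Nat.le_induction with
  | base => exact hi
  | succ j _ ih =>
    rw [hS, closure_eq_bot_iff]
    rintro x ⟨a, b, hb, rfl⟩
    rw [ih, mem_bot] at hb
    rw [hb, hf]
    rfl

end AddGroup

section LieRing

variable {A : Type*} [LieRing A]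

/-- `IsNestedBracket S n k x`: `x = ⁅w₁, ⁅w₂, …, ⁅w_k, w₀⁆⁆⁆` with `w_j ∈ S m_j` and
`n = Σ m_j + k`. -/
inductive IsNestedBracket (S : ℕ → AddSubgroup A) : ℕ → ℕ → A → Prop
  | of {m : ℕ} {w : A} : w ∈ S m → IsNestedBracket S m 0 w
  | bracket {m n k : ℕ} {w x : A} :
      w ∈ S m → IsNestedBracket S n k x → IsNestedBracket S (m + n + 1) (k + 1) ⁅w, x⁆

namespace IsNestedBracket

variable {S : ℕ → AddSubgroup A}

lemma bracket_of_eq {m n k p : ℕ} {w x : A} (hw : w ∈ S m) (hx : IsNestedBracket S n k x)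
    (hp : m + n + 1 = p) : IsNestedBracket S p (k + 1) ⁅w, x⁆ :=
  hp ▸ bracket hw hx

lemma mem_of_succ_eq_closure {g : ℕ → AddSubgroup A} (hg0 : g 0 = ⊤)
    (hg : ∀ i, g (i + 1) = closure {x | ∃ a b : A, b ∈ g i ∧ x = ⁅a, b⁆})
    {n k : ℕ} {x : A} (hx : IsNestedBracket S n k x) : x ∈ g k := by
  induction hx with
  | of _ => exact hg0 ▸ mem_top _
  | @bracket m n k w x _ _ ih => exact hg k ▸ subset_closure ⟨w, x, ih, rfl⟩

lemma eq_zero {M : ℕ} (hS : ∀ m, M ≤ m → S m = ⊥) {n k : ℕ} {x : A}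
    (hx : IsNestedBracket S n k x) (hn : (k + 1) * M ≤ n) : x = 0 := by
  induction hx with
  | @of m w hw => rwa [hS m (by omega)] at hw
  | @bracket m n k w x hw _ ih =>
    by_cases hm : M ≤ m
    · rw [hS m hm, mem_bot] at hw
      rw [hw, zero_lie]
    · have hM : (k + 1 + 1) * M = (k + 1) * M + M := by ring
      rw [ih (by omega), lie_zero]

lemma lie_mem_closure {a : A} (ha : a ∈ S 0) {n k : ℕ} {x : A}
    (hx : IsNestedBracket S n k x) :
    ⁅a, x⁆ ∈ closure {y | ∃ k', IsNestedBracket S (n + 1) k' y} :=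
  subset_closure ⟨k + 1, bracket_of_eq ha hx (by omega)⟩

lemma apply_mem_closure (t : A →+ A →+ A)
    (ht : ∀ x y z : A, t x ⁅y, z⁆ = ⁅t x y, z⁆ + ⁅y, t x z⁆)
    (hSt : ∀ a m w, w ∈ S m → t a w ∈ S (m + 1)) (a : A) {n k : ℕ} {x : A}
    (hx : IsNestedBracket S n k x) :
    t a x ∈ closure {y | ∃ k', IsNestedBracket S (n + 1) k' y} := by
  induction hx with
  | of hw => exact subset_closure ⟨0, of (hSt a _ _ hw)⟩
  | @bracket m n k w x hw hx ih =>
    rw [ht]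
    refine add_mem (subset_closure ⟨k + 1, bracket_of_eq (hSt a _ _ hw) hx (by omega)⟩) ?_
    refine apply_mem_closure_of_forall (AddMonoidHom.mk' (⁅w, ·⁆) (lie_add w)) ?_ ih
    rintro y ⟨k', hy⟩
    exact subset_closure ⟨k' + 1, bracket_of_eq hw hy (by omega)⟩

end IsNestedBracket

lemma le_closure_isNestedBracket (t : A →+ A →+ A)
    (ht : ∀ x y z : A, t x ⁅y, z⁆ = ⁅t x y, z⁆ + ⁅y, t x z⁆)
    {S : ℕ → AddSubgroup A} (hS0 : S 0 = ⊤) (hSt : ∀ a m w, w ∈ S m → t a w ∈ S (m + 1))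
    {L : ℕ → AddSubgroup A}
    (hL : ∀ i, L (i + 1) = closure {x | ∃ a b, b ∈ L i ∧ (x = t a b ∨ x = ⁅a, b⁆)}) :
    ∀ i, L i ≤ closure {x | ∃ k, IsNestedBracket S i k x}
  | 0 => fun x _ => subset_closure ⟨0, .of (hS0 ▸ mem_top x)⟩
  | i + 1 => by
    have ih := le_closure_isNestedBracket t ht hS0 hSt hL i
    rw [hL, closure_le]
    rintro x ⟨a, b, hb, rfl | rfl⟩
    · refine apply_mem_closure_of_forall (t a) ?_ (ih hb)
      rintro y ⟨k, hy⟩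
      exact hy.apply_mem_closure t ht hSt a
    · refine apply_mem_closure_of_forall (AddMonoidHom.mk' (⁅a, ·⁆) (lie_add a)) ?_ (ih hb)
      rintro y ⟨k, hy⟩
      exact hy.lie_mem_closure (hS0 ▸ mem_top a)

end LieRing

theorem stmt13_general {A : Type*} [LieRing A] (t : A →+ A →+ A)
    (h1 : ∀ x y z : A, t x ⁅y, z⁆ = ⁅t x y, z⁆ + ⁅y, t x z⁆)
    (Ls : ℕ → AddSubgroup A) (hL0 : Ls 0 = ⊤)
    (hLs : ∀ i, Ls (i + 1) = AddSubgroup.closure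
      {x : A | ∃ a b : A, b ∈ Ls i ∧ (x = t a b ∨ x = ⁅a, b⁆)})
    (as : ℕ → AddSubgroup A) (ha0 : as 0 = ⊤)
    (has : ∀ i, as (i + 1) = AddSubgroup.closure
      {x : A | ∃ a b : A, b ∈ as i ∧ x = t a b})
    (g : ℕ → AddSubgroup A) (hg0 : g 0 = ⊤)
    (hgs : ∀ i, g (i + 1) = AddSubgroup.closure
      {x : A | ∃ a b : A, b ∈ g i ∧ x = ⁅a, b⁆}) :
    (∃ k, Ls k = ⊥) ↔ (∃ k, as k = ⊥) ∧ (∃ k, g k = ⊥) := by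
  constructor
  · rintro ⟨k, hk⟩
    let L (U : AddSubgroup A) : Set A := {x | ∃ a b, b ∈ U ∧ (x = t a b ∨ x = ⁅a, b⁆)}
    have has_le := le_of_succ_eq_closure (fun U => {x | ∃ a b, b ∈ U ∧ x = t a b}) L
      (fun U V hUV x ⟨a, b, hb, hx⟩ => ⟨a, b, hUV hb, .inl hx⟩) hL0 has hLs
    have hg_le := le_of_succ_eq_closure (fun U => {x | ∃ a b, b ∈ U ∧ x = ⁅a, b⁆}) L
      (fun U V hUV x ⟨a, b, hb, hx⟩ => ⟨a, b, hUV hb, .inr hx⟩) hL0 hgs hLs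
    exact ⟨⟨k, le_bot_iff.1 (hk ▸ has_le k)⟩, ⟨k, le_bot_iff.1 (hk ▸ hg_le k)⟩⟩
  · rintro ⟨⟨M, hM⟩, ⟨N, hN⟩⟩
    have has_bot : ∀ m, M ≤ m → as m = ⊥ := fun m =>
      eq_bot_of_le_of_succ_eq_closure (fun a b => t a b) (fun a => map_zero (t a)) has hM
    have hg_bot : ∀ k, N ≤ k → g k = ⊥ := fun k =>
      eq_bot_of_le_of_succ_eq_closure (fun a b => ⁅a, b⁆) lie_zero hgs hN
    have hat : ∀ a m w, w ∈ as m → t a w ∈ as (m + 1) := fun a m w hw =>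
      has m ▸ subset_closure ⟨a, w, hw, rfl⟩
    refine ⟨N * M, le_bot_iff.1 ((le_closure_isNestedBracket t h1 ha0 hat hLs _).trans ?_)⟩
    rw [closure_le]
    rintro x ⟨k, hx⟩
    by_cases hk : N ≤ k
    · simpa [hg_bot k hk] using hx.mem_of_succ_eq_closure hg0 hgs
    · exact hx.eq_zero has_bot (Nat.mul_le_mul_right M (by omega))

/-- A post-Lie ring `(𝔞,▷)` is L-nilpotent (the series `L^{i+1}(𝔞) =
⟨a▷b, [a,b] : b ∈ L^i(𝔞)⟩₊` reaches `0`) iff it is left nilpotent (the series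
`𝔞^{i+1} = ⟨a▷b : b ∈ 𝔞^i⟩₊` reaches `0`) and the Lie ring `𝔞` is nilpotent
(the lower central series reaches `0`). -/
theorem stmt13 {A : Type*} [LieRing A] (t : A →+ A →+ A)
    (h1 : ∀ x y z : A, t x ⁅y, z⁆ = ⁅t x y, z⁆ + ⁅y, t x z⁆)
    (h2 : ∀ x y z : A, t ⁅x, y⁆ z =
      (t x (t y z) - t (t x y) z) - (t y (t x z) - t (t y x) z))
    (Ls : ℕ → AddSubgroup A) (hL0 : Ls 0 = ⊤)
    (hLs : ∀ i, Ls (i + 1) = AddSubgroup.closure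
      {x : A | ∃ a b : A, b ∈ Ls i ∧ (x = t a b ∨ x = ⁅a, b⁆)})
    (as : ℕ → AddSubgroup A) (ha0 : as 0 = ⊤)
    (has : ∀ i, as (i + 1) = AddSubgroup.closure
      {x : A | ∃ a b : A, b ∈ as i ∧ x = t a b})
    (g : ℕ → AddSubgroup A) (hg0 : g 0 = ⊤)
    (hgs : ∀ i, g (i + 1) = AddSubgroup.closure
      {x : A | ∃ a b : A, b ∈ g i ∧ x = ⁅a, b⁆}) :
    (∃ k, Ls k = ⊥) ↔ (∃ k, as k = ⊥) ∧ (∃ k, g k = ⊥) :=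
  stmt13_general t h1 Ls hL0 hLs as ha0 has g hg0 hgs
end

section
/- Let (𝔞, ▷) be an L-nilpotent post-Lie ring of class k (L^{k+1}(𝔞) = 0, L^k(𝔞) ≠ 0). Then the Lie ring 𝔞° with bracket {a,b} = [a,b] + a▷b − b▷a is nilpotent of class at most k, and the k-th term of the lower central series of 𝔞° is contained in the annihilator Ann(𝔞) = {a | ∀b, a▷b = b▷a = [a,b] = 0}. -/
/-- The circle bracket `{a,b} = [a,b] + a▷b - b▷a` of a post-Lie ring. -/
def cbr {A : Type*} [LieRing A] (t : A →+ A →+ A) (a b : A) : A :=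
  ⁅a, b⁆ + t a b - t b a

/-! The identity `(cbr c d) ▷ a = c ▷ (d ▷ a) - d ▷ (c ▷ a)` says that `𝔞°` acts on `𝔞` through
commutators of left multiplications. By induction, `γ^{i+1}(𝔞°) ▷ L^{j+1}(𝔞) ⊆ L^{i+j+2}(𝔞)`, and
with it `γ^{i+1}(𝔞°) ⊆ L^{i+1}(𝔞)`. For `L^{k+1}(𝔞) = 0` this puts `γ^k(𝔞°)` in the
annihilator, and then `γ^{k+1}(𝔞°)`, generated by brackets with `γ^k(𝔞°)`, vanishes. -/

section PostLie

variable {A : Type*} [LieRing A] (t : A →+ A →+ A)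

theorem map_cbr_apply
    (h2 : ∀ x y z : A, t ⁅x, y⁆ z =
      (t x (t y z) - t (t x y) z) - (t y (t x z) - t (t y x) z))
    (c d a : A) : t (cbr t c d) a = t c (t d a) - t d (t c a) := by
  simp only [cbr, map_add, map_sub, AddMonoidHom.add_apply, AddMonoidHom.sub_apply, h2]
  abel

/-- `Ls i` is `L^{i+1}(𝔞)` once `Ls 0 = ⊤`. -/
def IsLSeries (Ls : ℕ → AddSubgroup A) : Prop :=
  ∀ i, Ls (i + 1) = AddSubgroup.closure
    {x : A | ∃ a b : A, b ∈ Ls i ∧ (x = t a b ∨ x = ⁅a, b⁆)}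

/-- `gc i` is `γ^{i+1}(𝔞°)` once `gc 0 = ⊤`. -/
def IsCircLowerCentralSeries (gc : ℕ → AddSubgroup A) : Prop :=
  ∀ i, gc (i + 1) = AddSubgroup.closure {x : A | ∃ a b : A, b ∈ gc i ∧ x = cbr t a b}

variable {t} (Ls : ℕ → AddSubgroup A)

theorem apply_mem_succ (hLs : IsLSeries t Ls)
    {i : ℕ} (a : A) {b : A} (hb : b ∈ Ls i) : t a b ∈ Ls (i + 1) := by
  rw [hLs i]
  exact AddSubgroup.subset_closure ⟨a, b, hb, Or.inl rfl⟩

theorem lie_mem_succ (hLs : IsLSeries t Ls)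
    {i : ℕ} (a : A) {b : A} (hb : b ∈ Ls i) : ⁅a, b⁆ ∈ Ls (i + 1) := by
  rw [hLs i]
  exact AddSubgroup.subset_closure ⟨a, b, hb, Or.inr rfl⟩

variable (gc : ℕ → AddSubgroup A)

theorem apply_mem_of_mem_lowerCentral
    (h2 : ∀ x y z : A, t ⁅x, y⁆ z =
      (t x (t y z) - t (t x y) z) - (t y (t x z) - t (t y x) z))
    (hLs : IsLSeries t Ls) (hgcs : IsCircLowerCentralSeries t gc)
    (i : ℕ) {b : A} (hb : b ∈ gc i) {j : ℕ} {a : A} (ha : a ∈ Ls j) :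
    t b a ∈ Ls (i + j + 1) := by
  induction i generalizing j a b with
  | zero => simpa using apply_mem_succ Ls hLs b ha
  | succ i ih =>
    suffices gc (i + 1) ≤ (Ls (i + 1 + j + 1)).comap (t.flip a) from this hb
    rw [hgcs i, AddSubgroup.closure_le]
    rintro _ ⟨c, d, hd, rfl⟩
    have hcda : t c (t d a) ∈ Ls (i + j + 1 + 1) := apply_mem_succ Ls hLs c (ih hd ha)
    have hdca : t d (t c a) ∈ Ls (i + (j + 1) + 1) := ih hd (apply_mem_succ Ls hLs c ha)
    rw [SetLike.mem_coe, AddSubgroup.mem_comap, AddMonoidHom.flip_apply, map_cbr_apply t h2]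
    exact sub_mem (by convert hcda using 2; omega) (by convert hdca using 2; omega)

theorem lowerCentral_le
    (h2 : ∀ x y z : A, t ⁅x, y⁆ z =
      (t x (t y z) - t (t x y) z) - (t y (t x z) - t (t y x) z))
    (hL0 : Ls 0 = ⊤) (hLs : IsLSeries t Ls) (hgc0 : gc 0 = ⊤) (hgcs : IsCircLowerCentralSeries t gc)
    (i : ℕ) : gc i ≤ Ls i := by
  induction i with
  | zero => rw [hgc0, hL0]
  | succ i ih =>
    rw [hgcs i, AddSubgroup.closure_le]
    rintro _ ⟨a, b, hb, rfl⟩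
    have hba : t b a ∈ Ls (i + 0 + 1) :=
      apply_mem_of_mem_lowerCentral Ls gc h2 hLs hgcs i hb (hL0 ▸ AddSubgroup.mem_top a)
    exact sub_mem (add_mem (lie_mem_succ Ls hLs a (ih hb)) (apply_mem_succ Ls hLs a (ih hb))) hba

theorem annihilates_of_mem_lowerCentral
    (h2 : ∀ x y z : A, t ⁅x, y⁆ z =
      (t x (t y z) - t (t x y) z) - (t y (t x z) - t (t y x) z))
    (hL0 : Ls 0 = ⊤) (hLs : IsLSeries t Ls) (hgc0 : gc 0 = ⊤) (hgcs : IsCircLowerCentralSeries t gc)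
    {m : ℕ} (hm : Ls (m + 1) = ⊥) {a : A} (ha : a ∈ gc m) (b : A) :
    t a b = 0 ∧ t b a = 0 ∧ ⁅a, b⁆ = 0 := by
  have haL : a ∈ Ls m := lowerCentral_le Ls gc h2 hL0 hLs hgc0 hgcs m ha
  have hab : t a b ∈ Ls (m + 0 + 1) :=
    apply_mem_of_mem_lowerCentral Ls gc h2 hLs hgcs m ha (hL0 ▸ AddSubgroup.mem_top b)
  have hba : t b a ∈ Ls (m + 1) := apply_mem_succ Ls hLs b haL
  have hlie : ⁅b, a⁆ ∈ Ls (m + 1) := lie_mem_succ Ls hLs b haL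
  rw [Nat.add_zero, hm, AddSubgroup.mem_bot] at hab
  rw [hm, AddSubgroup.mem_bot] at hba hlie
  exact ⟨hab, hba, by rw [← lie_skew, hlie, neg_zero]⟩

theorem lowerCentral_succ_eq_bot
    (hgcs : IsCircLowerCentralSeries t gc)
    {m : ℕ} (hann : ∀ b ∈ gc m, ∀ a : A, t b a = 0 ∧ t a b = 0 ∧ ⁅b, a⁆ = 0) :
    gc (m + 1) = ⊥ := by
  rw [hgcs m, eq_bot_iff, AddSubgroup.closure_le]
  rintro _ ⟨a, b, hb, rfl⟩
  obtain ⟨hba, hab, hlie⟩ := hann b hb a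
  have hlie' : ⁅a, b⁆ = 0 := by rw [← lie_skew, hlie, neg_zero]
  simp [cbr, hab, hba, hlie']

end PostLie

theorem stmt14_general {A : Type*} [LieRing A] (t : A →+ A →+ A)
    (h2 : ∀ x y z : A, t ⁅x, y⁆ z =
      (t x (t y z) - t (t x y) z) - (t y (t x z) - t (t y x) z))
    (Ls : ℕ → AddSubgroup A) (hL0 : Ls 0 = ⊤)
    (hLs : ∀ i, Ls (i + 1) = AddSubgroup.closure
      {x : A | ∃ a b : A, b ∈ Ls i ∧ (x = t a b ∨ x = ⁅a, b⁆)})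
    (k : ℕ) (hk : Ls k = ⊥)
    (gc : ℕ → AddSubgroup A) (hgc0 : gc 0 = ⊤)
    (hgcs : ∀ i, gc (i + 1) = AddSubgroup.closure
      {x : A | ∃ a b : A, b ∈ gc i ∧ x = cbr t a b}) :
    gc k = ⊥ ∧
    ∀ a ∈ gc (k - 1), ∀ b : A, t a b = 0 ∧ t b a = 0 ∧ ⁅a, b⁆ = 0 := by
  obtain _ | m := k
  · have : Subsingleton A :=
      AddSubgroup.subsingleton_iff.mp (subsingleton_of_bot_eq_top (hk ▸ hL0))
    exact ⟨Subsingleton.elim _ _, fun _ _ _ => ⟨Subsingleton.elim _ _, Subsingleton.elim _ _,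
      Subsingleton.elim _ _⟩⟩
  · have hann := fun a (ha : a ∈ gc m) =>
      annihilates_of_mem_lowerCentral Ls gc h2 hL0 hLs hgc0 hgcs hk ha
    exact ⟨lowerCentral_succ_eq_bot gc hgcs hann, hann⟩

/-- Let `(𝔞,▷)` be an L-nilpotent post-Lie ring of class `k` (`L^{k+1}(𝔞) = 0`,
`L^k(𝔞) ≠ 0`; here `Ls i = L^{i+1}(𝔞)`). Then `𝔞°` is nilpotent of class at
most `k` (its lower central series `gc`, with `gc i = γ^{i+1}(𝔞°)`, satisfies
`gc k = 0`) and the `k`-th term `γ^k(𝔞°) = gc (k-1)` is contained in the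
annihilator `Ann(𝔞)`. -/
theorem stmt14 {A : Type*} [LieRing A] (t : A →+ A →+ A)
    (h1 : ∀ x y z : A, t x ⁅y, z⁆ = ⁅t x y, z⁆ + ⁅y, t x z⁆)
    (h2 : ∀ x y z : A, t ⁅x, y⁆ z =
      (t x (t y z) - t (t x y) z) - (t y (t x z) - t (t y x) z))
    (Ls : ℕ → AddSubgroup A) (hL0 : Ls 0 = ⊤)
    (hLs : ∀ i, Ls (i + 1) = AddSubgroup.closure
      {x : A | ∃ a b : A, b ∈ Ls i ∧ (x = t a b ∨ x = ⁅a, b⁆)})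
    (k : ℕ) (hk : Ls k = ⊥) (hk' : 1 ≤ k → Ls (k - 1) ≠ ⊥)
    (gc : ℕ → AddSubgroup A) (hgc0 : gc 0 = ⊤)
    (hgcs : ∀ i, gc (i + 1) = AddSubgroup.closure
      {x : A | ∃ a b : A, b ∈ gc i ∧ x = cbr t a b}) :
    gc k = ⊥ ∧
    ∀ a ∈ gc (k - 1), ∀ b : A, t a b = 0 ∧ t b a = 0 ∧ ⁅a, b⁆ = 0 :=
  stmt14_general t h2 Ls hL0 hLs k hk gc hgc0 hgcs
end

section
/- Let A be a skew brace and define L¹(A) = A and L^{i+1}(A) the subgroup of (A,·) generated by all a*b = a⁻¹·(a∘b)·b⁻¹ and all commutators a·b·a⁻¹·b⁻¹ with a ∈ A, b ∈ L^i(A). Then each L^i(A) is a strong left ideal of A (a normal subgroup of (A,·) stable under all λ_a) and [L^i(A), L^j(A)] ⊆ L^{i+j}(A) for all i, j ≥ 1, where brackets denote group commutators in (A,·). -/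
/-- A skew brace structure on a group `(A,·)`: a second group operation `∘`
(with identity `e` and inverse `cinv`) satisfying
`a ∘ (b · c) = (a ∘ b) · a⁻¹ · (a ∘ c)`. -/
structure SkewBrace (A : Type*) [Group A] where
  circ : A → A → A
  e : A
  cinv : A → A
  circ_assoc : ∀ a b c, circ (circ a b) c = circ a (circ b c)
  e_circ : ∀ a, circ e a = a
  circ_e : ∀ a, circ a e = a
  cinv_circ : ∀ a, circ (cinv a) a = e
  circ_cinv : ∀ a, circ a (cinv a) = e
  compat : ∀ a b c, circ a (b * c) = circ a b * a⁻¹ * circ a c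

/-- The λ-map of a skew brace: `λ_a(b) = a⁻¹ · (a ∘ b)`. -/
def SkewBrace.lam {A : Type*} [Group A] (B : SkewBrace A) (a b : A) : A :=
  a⁻¹ * B.circ a b

/-!
Each `λ_a` is an endomorphism of `(A,·)` with `λ_{a∘b} = λ_a ∘ λ_b`, so `λ`-stability passes from
`L^i` to the generators of `L^{i+1}`. As `[g, x]` generates `L^{i+1}` for `x ∈ L^i`, the series is
decreasing, every `L^i` is normal, and `L^i / L^{i+1}` is central in `A / L^{i+1}`.

The inclusion `[L^i, L^j] ⊆ L^{i+j}` is proved by induction on `j`. For fixed `x` and normal `N`,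
the `y` with `[x, y] ∈ N` form a subgroup, so only the generators `λ_a(d) d⁻¹` and `[a, d]` of
`L^{j+1}` need checking. In both cases an explicit commutator identity writes `[x, y]` as a product
of factors that lie in `L^{i+j+1}` by the induction hypothesis (at `i` and at `i + 1`) and by
centrality of the layers; for `λ_a(d) d⁻¹` it compares `λ_a[x, d] = [λ_a x, λ_a d]` with `[x, d]`.
-/

open scoped commutatorElement

theorem commutatorElement_mem_of_mem_closure {G : Type*} [Group G] {N : Subgroup G}
    [hN : N.Normal] {S : Set G} {x y : G} (hS : ∀ s ∈ S, ⁅x, s⁆ ∈ N) (hy : y ∈ Subgroup.closure S) :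
    ⁅x, y⁆ ∈ N := by
  induction hy using Subgroup.closure_induction with
  | mem s hs => exact hS s hs
  | one => simp
  | mul y z _ _ hy hz =>
    have h : ⁅x, y * z⁆ = ⁅x, y⁆ * (y * ⁅x, z⁆ * y⁻¹) := by
      simp only [commutatorElement_def]; group
    rw [h]
    exact mul_mem hy (hN.conj_mem _ hz y)
  | inv y _ hy =>
    have h := hN.conj_mem _ (inv_mem hy) y⁻¹
    rwa [commutatorElement_inv, inv_inv, ← commutatorElement_inv_right] at h

namespace SkewBrace

variable {A : Type*} [Group A] (B : SkewBrace A)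

theorem lam_mul (a b c : A) : B.lam a (b * c) = B.lam a b * B.lam a c := by
  unfold lam
  rw [B.compat]
  group

def lamHom (a : A) : A →* A :=
  MonoidHom.mk' (B.lam a) (B.lam_mul a)

theorem lam_inv (a b : A) : B.lam a b⁻¹ = (B.lam a b)⁻¹ :=
  map_inv (B.lamHom a) b

theorem lam_commutatorElement (a b c : A) : B.lam a ⁅b, c⁆ = ⁅B.lam a b, B.lam a c⁆ :=
  map_commutatorElement (B.lamHom a) b c

theorem lam_circ (a b c : A) : B.lam (B.circ a b) c = B.lam a (B.lam b c) := by
  have h := B.lam_inv a b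
  unfold lam at h ⊢
  rw [B.compat, ← B.circ_assoc, ← mul_assoc a⁻¹, ← mul_assoc a⁻¹, h]
  group

def lowerSucc (H : Subgroup A) : Subgroup A :=
  Subgroup.closure
    {x : A | ∃ a b : A, b ∈ H ∧ (x = a⁻¹ * B.circ a b * b⁻¹ ∨ x = a * b * a⁻¹ * b⁻¹)}

variable {B}

theorem lam_mul_inv_mem_lowerSucc {H : Subgroup A} {b : A} (hb : b ∈ H) (a : A) :
    B.lam a b * b⁻¹ ∈ B.lowerSucc H :=
  Subgroup.subset_closure ⟨a, b, hb, .inl rfl⟩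

theorem commutatorElement_mem_lowerSucc {H : Subgroup A} {b : A} (hb : b ∈ H) (a : A) :
    ⁅a, b⁆ ∈ B.lowerSucc H :=
  Subgroup.subset_closure ⟨a, b, hb, .inr rfl⟩

theorem lowerSucc_mono {H K : Subgroup A} (h : H ≤ K) : B.lowerSucc H ≤ B.lowerSucc K :=
  Subgroup.closure_mono fun _ ⟨a, b, hb, hx⟩ => ⟨a, b, h hb, hx⟩

theorem lam_mem_lowerSucc {H : Subgroup A} (hH : ∀ a, ∀ x ∈ H, B.lam a x ∈ H) (a : A) :
    ∀ x ∈ B.lowerSucc H, B.lam a x ∈ B.lowerSucc H := by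
  suffices B.lowerSucc H ≤ (B.lowerSucc H).comap (B.lamHom a) from fun x hx => this hx
  refine Subgroup.closure_le _ |>.mpr ?_
  rintro _ ⟨a', b, hb, rfl | rfl⟩
  · have h : B.lam a (B.lam a' b * b⁻¹) =
        (B.lam (B.circ a a') b * b⁻¹) * (B.lam a b * b⁻¹)⁻¹ := by
      rw [B.lam_mul, B.lam_inv, B.lam_circ]; group
    change B.lam a (B.lam a' b * b⁻¹) ∈ B.lowerSucc H
    rw [h]
    exact mul_mem (lam_mul_inv_mem_lowerSucc hb _) (inv_mem (lam_mul_inv_mem_lowerSucc hb a))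
  · change B.lam a ⁅a', b⁆ ∈ B.lowerSucc H
    rw [lam_commutatorElement]
    exact commutatorElement_mem_lowerSucc (hH a b hb) (B.lam a a')

variable (B)

/-- `B.lowerSeries i` is the paper's `L^{i+1}(A)`. -/
def lowerSeries : ℕ → Subgroup A
  | 0 => ⊤
  | i + 1 => B.lowerSucc (lowerSeries i)

theorem lowerSeries_antitone : Antitone B.lowerSeries := by
  refine antitone_nat_of_succ_le fun i => ?_
  induction i with
  | zero => exact le_top
  | succ n ih => exact lowerSucc_mono ih

variable {B}

theorem commutatorElement_mem_lowerSeries_succ {i : ℕ} {b : A} (hb : b ∈ B.lowerSeries i)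
    (a : A) : ⁅a, b⁆ ∈ B.lowerSeries (i + 1) :=
  commutatorElement_mem_lowerSucc hb a

theorem lam_mul_inv_mem_lowerSeries_succ {i : ℕ} {b : A} (hb : b ∈ B.lowerSeries i)
    (a : A) : B.lam a b * b⁻¹ ∈ B.lowerSeries (i + 1) :=
  lam_mul_inv_mem_lowerSucc hb a

variable (B)

instance lowerSeries_normal (i : ℕ) : (B.lowerSeries i).Normal := by
  cases i with
  | zero => exact Subgroup.normal_top
  | succ n =>
    refine ⟨fun x hx g => ?_⟩
    have h : g * x * g⁻¹ = ⁅g, x⁆ * x := by simp only [commutatorElement_def]; group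
    rw [h]
    have hx' : x ∈ B.lowerSeries n := B.lowerSeries_antitone n.le_succ hx
    exact mul_mem (commutatorElement_mem_lowerSeries_succ hx' g) hx

theorem lam_mem_lowerSeries (i : ℕ) (a : A) :
    ∀ x ∈ B.lowerSeries i, B.lam a x ∈ B.lowerSeries i := by
  induction i generalizing a with
  | zero => exact fun _ _ => trivial
  | succ n ih => exact lam_mem_lowerSucc ih a

variable {B}

theorem commutatorElement_lam_mul_inv_mem {n : ℕ}
    (ih : ∀ {i : ℕ} {x y : A}, x ∈ B.lowerSeries i → y ∈ B.lowerSeries n →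
      ⁅x, y⁆ ∈ B.lowerSeries (i + n + 1))
    {i : ℕ} {x d : A} (hx : x ∈ B.lowerSeries i)
    (hd : d ∈ B.lowerSeries n) (a : A) :
    ⁅x, B.lam a d * d⁻¹⁆ ∈ B.lowerSeries (i + n + 2) := by
  set s := B.lam a x * x⁻¹
  set t := B.lam a d * d⁻¹
  set c := ⁅x, d⁆
  have hc : c ∈ B.lowerSeries (i + n + 1) := ih hx hd
  have h₁ : s⁻¹ * (B.lam a c * c⁻¹) * s⁻¹⁻¹ ∈ B.lowerSeries (i + n + 2) :=
    (B.lowerSeries_normal _).conj_mem _ (lam_mul_inv_mem_lowerSeries_succ hc a) _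
  have h₂ : ⁅s⁻¹, c * t * d⁆ ∈ B.lowerSeries (i + n + 2) := by
    have hs : s⁻¹ ∈ B.lowerSeries (i + 1) := inv_mem (lam_mul_inv_mem_lowerSeries_succ hx a)
    have hg : c * t * d ∈ B.lowerSeries n :=
      mul_mem (mul_mem (B.lowerSeries_antitone (by omega) hc)
        (B.lowerSeries_antitone n.le_succ (lam_mul_inv_mem_lowerSeries_succ hd a))) hd
    simpa only [Nat.add_right_comm _ 1] using ih hs hg
  have h₃ : ⁅c, t⁆ ∈ B.lowerSeries (i + n + 2) := by
    rw [← commutatorElement_inv]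
    exact inv_mem (commutatorElement_mem_lowerSeries_succ hc t)
  have key : ⁅x, t⁆ = s⁻¹ * (B.lam a c * c⁻¹) * s⁻¹⁻¹ * ⁅s⁻¹, c * t * d⁆ * ⁅c, t⁆ := by
    rw [lam_commutatorElement]
    simp only [s, t, c, commutatorElement_def]
    group
  rw [key]
  exact mul_mem (mul_mem h₁ h₂) h₃

theorem commutatorElement_commutatorElement_mem {n : ℕ}
    (ih : ∀ {i : ℕ} {x y : A}, x ∈ B.lowerSeries i → y ∈ B.lowerSeries n →
      ⁅x, y⁆ ∈ B.lowerSeries (i + n + 1))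
    {i : ℕ} {x d : A} (hx : x ∈ B.lowerSeries i)
    (hd : d ∈ B.lowerSeries n) (a : A) :
    ⁅x, ⁅a, d⁆⁆ ∈ B.lowerSeries (i + n + 2) := by
  set k := ⁅a⁻¹, x⁆
  set c := ⁅x, d⁆
  set e := ⁅a, d⁆
  have hc : c ∈ B.lowerSeries (i + n + 1) := ih hx hd
  have h₁ : ⁅a, ⁅a⁻¹ * x * a, d⁆⁆ ∈ B.lowerSeries (i + n + 2) := by
    have hx' : a⁻¹ * x * a ∈ B.lowerSeries i := by
      simpa using (B.lowerSeries_normal _).conj_mem x hx a⁻¹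
    exact commutatorElement_mem_lowerSeries_succ (ih hx' hd) a
  have h₂ : ⁅k, c⁆ ∈ B.lowerSeries (i + n + 2) := commutatorElement_mem_lowerSeries_succ hc k
  have h₃ : c * ⁅k, d⁆ * c⁻¹ ∈ B.lowerSeries (i + n + 2) := by
    have hk : k ∈ B.lowerSeries (i + 1) := commutatorElement_mem_lowerSeries_succ hx a⁻¹
    refine (B.lowerSeries_normal _).conj_mem _ ?_ c
    simpa only [Nat.add_right_comm _ 1] using ih hk hd
  have h₄ : c * ⁅e, c⁻¹⁆ * c⁻¹ ∈ B.lowerSeries (i + n + 2) :=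
    (B.lowerSeries_normal _).conj_mem _
      (commutatorElement_mem_lowerSeries_succ (inv_mem hc) e) c
  have key : ⁅x, e⁆ =
      ⁅a, ⁅a⁻¹ * x * a, d⁆⁆ * ⁅k, c⁆ * (c * ⁅k, d⁆ * c⁻¹) * (c * ⁅e, c⁻¹⁆ * c⁻¹) := by
    simp only [k, c, e, commutatorElement_def]
    group
  rw [key]
  exact mul_mem (mul_mem (mul_mem h₁ h₂) h₃) h₄

theorem commutatorElement_mem_lowerSeries {i j : ℕ} {x y : A} (hx : x ∈ B.lowerSeries i)
    (hy : y ∈ B.lowerSeries j) : ⁅x, y⁆ ∈ B.lowerSeries (i + j + 1) := by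
  induction j generalizing i x y with
  | zero =>
    rw [← commutatorElement_inv]
    exact inv_mem (commutatorElement_mem_lowerSeries_succ hx y)
  | succ n ih =>
    refine commutatorElement_mem_of_mem_closure ?_ hy
    rintro _ ⟨a, d, hd, rfl | rfl⟩
    · exact commutatorElement_lam_mul_inv_mem ih hx hd a
    · exact commutatorElement_commutatorElement_mem ih hx hd a

end SkewBrace

/-- Let `A` be a skew brace and `L¹(A) = A`, `L^{i+1}(A)` the subgroup of
`(A,·)` generated by all `a * b = a⁻¹·(a∘b)·b⁻¹` and all commutators
`a·b·a⁻¹·b⁻¹` with `b ∈ L^i(A)` (here `Ls i = L^{i+1}(A)`). Then each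
`L^i(A)` is a strong left ideal and `[L^i(A), L^j(A)] ⊆ L^{i+j}(A)`. -/
theorem stmt15 {A : Type*} [Group A] (B : SkewBrace A)
    (Ls : ℕ → Subgroup A) (h0 : Ls 0 = ⊤)
    (hs : ∀ i, Ls (i + 1) = Subgroup.closure
      {x : A | ∃ a b : A, b ∈ Ls i ∧
        (x = a⁻¹ * B.circ a b * b⁻¹ ∨ x = a * b * a⁻¹ * b⁻¹)}) :
    (∀ i, (Ls i).Normal) ∧
    (∀ i, ∀ a : A, ∀ x ∈ Ls i, B.lam a x ∈ Ls i) ∧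
    (∀ i j, ∀ x ∈ Ls i, ∀ y ∈ Ls j, x * y * x⁻¹ * y⁻¹ ∈ Ls (i + j + 1)) := by
  obtain rfl : Ls = B.lowerSeries := funext fun i => by
    induction i with
    | zero => exact h0
    | succ n ih => rw [hs n, ih]; rfl
  exact ⟨B.lowerSeries_normal, B.lam_mem_lowerSeries,
    fun _ _ _ hx _ hy => SkewBrace.commutatorElement_mem_lowerSeries hx hy⟩
end
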